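/- arXiv:2306.05306 — 2 statements merged into one kernel-verified Lean document; each statement's English description precedes it below -/
import Mathlib

section
/- Let G = (V,E) be a d-regular finite graph, and let t₁ be the smallest eigenvalue of its normalized adjacency matrix (1/d)A. Then 1 + t₁ ≥ β_out²/(16d), where β_out is the outer vertex bipartiteness constant of G. -/
/-!
Let `f ≠ 0` satisfy `A f = d r f` and let `Q = ∑_{x ∼ y} (f x + f y)²`, so that
`Q = 2 d (1 + r) ∑ f²` by regularity. For a threshold `t > 0`, split `{f² ≥ t}` into its negative
and positive parts `L_t`, `R_t`; the definition of `β_out` bounds `β_out · |L_t ∪ R_t|` by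
`I(L_t) + I(R_t) + |∂_out(L_t ∪ R_t)|`. A vertex `x` counted in `I` has `t ≤ w x²`, where
`w x = (∑_{y ∼ x} (f x + f y)²)^{1/2}`, and a boundary vertex `y` has `f y² < t ≤ (w y + |f y|)²`.
Integrating over `t` gives `β_out ∑ f² ≤ 2 Q + 2 √(Q ∑ f²)` (Cauchy–Schwarz for `∑ w |f|`), i.e.
`β_out ≤ 2 s² + 2 s` with `s² = 2 d (1 + r)`; together with `β_out ≤ 1` this forces
`β_out² ≤ 8 s² = 16 d (1 + r)`.
-/

attribute [local instance] Classical.propDecidable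

/-- The outer vertex boundary of a finite set `U`: vertices outside `U` with a neighbor in `U`. -/
noncomputable def outBd {V : Type*} [Fintype V] (Adj : V → V → Prop) (U : Finset V) : Finset V :=
  Finset.univ.filter fun y => y ∉ U ∧ ∃ x ∈ U, Adj x y

/-- `I(L)` is the number of vertices of `L` having a neighbor in `L`. -/
noncomputable def II {V : Type*} (Adj : V → V → Prop) (L : Finset V) : ℕ :=
  (L.filter fun x => ∃ y ∈ L, Adj x y).card

/-- The outer vertex bipartiteness constant `β_out`. -/
noncomputable def betaOut {V : Type*} [Fintype V] (Adj : V → V → Prop) : ℝ :=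
  sInf {r : ℝ | ∃ L R : Finset V, Disjoint L R ∧ (L ∪ R).Nonempty ∧
    r = ((II Adj L : ℝ) + (II Adj R : ℝ) + ((outBd Adj (L ∪ R)).card : ℝ)) /
      ((L ∪ R).card : ℝ)}

open Finset MeasureTheory Matrix

section BetaOut

variable {V : Type*} [Fintype V] (Adj : V → V → Prop)

lemma betaOut_mul_card_le {L R : Finset V} (hLR : Disjoint L R) :
    betaOut Adj * #(L ∪ R) ≤ II Adj L + II Adj R + #(outBd Adj (L ∪ R)) := by
  rcases (L ∪ R).eq_empty_or_nonempty with hempty | hne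
  · rw [hempty, card_empty, Nat.cast_zero, mul_zero]
    positivity
  · rw [← le_div_iff₀ (by exact_mod_cast hne.card_pos)]
    refine csInf_le ⟨0, ?_⟩ ⟨L, R, hLR, hne, rfl⟩
    rintro r ⟨L, R, -, -, rfl⟩
    positivity

lemma betaOut_nonneg : 0 ≤ betaOut Adj :=
  Real.sInf_nonneg <| by rintro r ⟨L, R, -, -, rfl⟩; positivity

lemma betaOut_le_one [Nonempty V] : betaOut Adj ≤ 1 := by
  have hcard : (0 : ℝ) < #(univ : Finset V) := by exact_mod_cast univ_nonempty.card_pos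
  have hII : II Adj univ ≤ #univ := card_filter_le _ _
  have hII0 : II Adj ∅ = 0 := rfl
  have hout : outBd Adj univ = ∅ := by ext; simp [outBd]
  have h := betaOut_mul_card_le Adj (disjoint_empty_right univ)
  rw [union_empty, hout, hII0, card_empty, Nat.cast_zero, add_zero, add_zero] at h
  exact le_of_mul_le_mul_right (by rw [one_mul]; exact h.trans (by exact_mod_cast hII)) hcard

end BetaOut

lemma card_filter_mem_Ioc_eq_sum_indicator {ι : Type*} [Fintype ι] (p q : ι → ℝ) (t : ℝ) :
    (#{i | t ∈ Set.Ioc (p i) (q i)} : ℝ) = ∑ i, (Set.Ioc (p i) (q i)).indicator 1 t := by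
  rw [card_filter, Nat.cast_sum]
  simp [Set.indicator_apply]

lemma integrable_card_filter_mem_Ioc {ι : Type*} [Fintype ι] (p q : ι → ℝ) :
    Integrable fun t ↦ (#{i | t ∈ Set.Ioc (p i) (q i)} : ℝ) := by
  simp_rw [card_filter_mem_Ioc_eq_sum_indicator]
  exact integrable_finsetSum _ fun i _ ↦
    (integrable_indicator_iff measurableSet_Ioc).2 (integrableOn_const measure_Ioc_lt_top.ne)

lemma integral_card_filter_mem_Ioc {ι : Type*} [Fintype ι] {p q : ι → ℝ}
    (hpq : ∀ i, p i ≤ q i) :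
    ∫ t, (#{i | t ∈ Set.Ioc (p i) (q i)} : ℝ) = ∑ i, (q i - p i) := by
  simp_rw [card_filter_mem_Ioc_eq_sum_indicator]
  rw [integral_finsetSum]
  · simp [integral_indicator_one measurableSet_Ioc, Real.volume_real_Ioc_of_le (hpq _)]
  · exact fun i _ ↦
      (integrable_indicator_iff measurableSet_Ioc).2 (integrableOn_const measure_Ioc_lt_top.ne)

section LevelSets

variable {V : Type*} [Fintype V] (Adj : V → V → Prop) (f : V → ℝ)

noncomputable def signlessForm : ℝ := ∑ x, ∑ y with Adj x y, (f x + f y) ^ 2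

noncomputable def signlessLocalNorm (x : V) : ℝ := √(∑ y with Adj x y, (f x + f y) ^ 2)

lemma sum_sq_signlessLocalNorm : ∑ x, signlessLocalNorm Adj f x ^ 2 = signlessForm Adj f :=
  sum_congr rfl fun _ _ ↦ Real.sq_sqrt <| sum_nonneg fun _ _ ↦ sq_nonneg _

variable {Adj} in
lemma abs_add_le_signlessLocalNorm {x y : V} (h : Adj x y) :
    |f x + f y| ≤ signlessLocalNorm Adj f x :=
  Real.abs_le_sqrt <|
    single_le_sum (f := fun y ↦ (f x + f y) ^ 2) (fun _ _ ↦ sq_nonneg _) (by simpa using h)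

noncomputable def negLevelSet (t : ℝ) : Finset V := {x | f x < 0 ∧ t ≤ f x ^ 2}

noncomputable def posLevelSet (t : ℝ) : Finset V := {x | 0 < f x ∧ t ≤ f x ^ 2}

lemma disjoint_negLevelSet_posLevelSet (t : ℝ) :
    Disjoint (negLevelSet f t) (posLevelSet f t) :=
  disjoint_filter.2 fun _ _ hneg hpos ↦ hneg.1.not_gt hpos.1

lemma negLevelSet_union_posLevelSet {t : ℝ} (ht : 0 < t) :
    negLevelSet f t ∪ posLevelSet f t = ({x | t ≤ f x ^ 2} : Finset V) := by
  ext x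
  simp only [negLevelSet, posLevelSet, mem_union, mem_filter, mem_univ, true_and]
  constructor
  · rintro (⟨-, h⟩ | ⟨-, h⟩) <;> exact h
  · intro h
    rcases lt_trichotomy (f x) 0 with hx | hx | hx
    · exact .inl ⟨hx, h⟩
    · rw [hx] at h; linarith
    · exact .inr ⟨hx, h⟩

lemma II_le_card_filter_le_sq_signlessLocalNorm {U : Finset V} {t : ℝ}
    (hle : ∀ x ∈ U, t ≤ f x ^ 2) (hsign : ∀ x ∈ U, ∀ y ∈ U, 0 ≤ f x * f y) :
    II Adj U ≤ #{x ∈ U | t ≤ signlessLocalNorm Adj f x ^ 2} := by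
  refine card_le_card <| monotone_filter_right _ fun x hx ⟨y, hy, hxy⟩ ↦ ?_
  calc t ≤ f x ^ 2 := hle x hx
    _ ≤ (f x + f y) ^ 2 := by nlinarith [hsign x hx y hy]
    _ ≤ _ := sq_le_sq.2 <| (abs_add_le_signlessLocalNorm f hxy).trans (le_abs_self _)

lemma II_negLevelSet_add_II_posLevelSet_le {t : ℝ} (ht : 0 < t) :
    II Adj (negLevelSet f t) + II Adj (posLevelSet f t) ≤
      #{x | t ∈ Set.Ioc 0 (signlessLocalNorm Adj f x ^ 2)} := by
  have hneg := II_le_card_filter_le_sq_signlessLocalNorm Adj f (U := negLevelSet f t) (t := t)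
    (fun x hx ↦ (mem_filter.1 hx).2.2) fun x hx y hy ↦
      mul_nonneg_of_nonpos_of_nonpos (mem_filter.1 hx).2.1.le (mem_filter.1 hy).2.1.le
  have hpos := II_le_card_filter_le_sq_signlessLocalNorm Adj f (U := posLevelSet f t) (t := t)
    (fun x hx ↦ (mem_filter.1 hx).2.2) fun x hx y hy ↦
      mul_nonneg (mem_filter.1 hx).2.1.le (mem_filter.1 hy).2.1.le
  refine (add_le_add hneg hpos).trans ?_
  rw [← card_union_of_disjoint (disjoint_filter_filter (disjoint_negLevelSet_posLevelSet f t)),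
    ← filter_union]
  exact card_le_card fun x hx ↦ by simpa [ht] using (mem_filter.1 hx).2

variable {Adj} in
lemma card_outBd_le (hsymm : ∀ x y, Adj x y → Adj y x) (t : ℝ) :
    #(outBd Adj {x | t ≤ f x ^ 2}) ≤
      #{y | t ∈ Set.Ioc (f y ^ 2) ((signlessLocalNorm Adj f y + |f y|) ^ 2)} := by
  refine card_le_card fun y hy ↦ ?_
  simp only [outBd, mem_filter, mem_univ, true_and, not_le] at hy ⊢
  obtain ⟨hy, x, hx, hxy⟩ := hy
  refine ⟨hy, hx.trans <| sq_le_sq.2 ?_⟩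
  calc |f x| = |(f y + f x) - f y| := by ring_nf
    _ ≤ |f y + f x| + |f y| := abs_sub _ _
    _ ≤ signlessLocalNorm Adj f y + |f y| := by
      gcongr; exact abs_add_le_signlessLocalNorm f (hsymm x y hxy)
    _ ≤ _ := le_abs_self _

variable {Adj} in
lemma betaOut_mul_card_level_le (hsymm : ∀ x y, Adj x y → Adj y x) (t : ℝ) :
    betaOut Adj * #{x | t ∈ Set.Ioc 0 (f x ^ 2)} ≤
      #{x | t ∈ Set.Ioc 0 (signlessLocalNorm Adj f x ^ 2)} +
        #{y | t ∈ Set.Ioc (f y ^ 2) ((signlessLocalNorm Adj f y + |f y|) ^ 2)} := by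
  rcases le_or_gt t 0 with ht | ht
  · rw [filter_false_of_mem fun x _ hx ↦ ht.not_gt hx.1, card_empty, Nat.cast_zero, mul_zero]
    positivity
  have hlevel : ({x | t ∈ Set.Ioc 0 (f x ^ 2)} : Finset V) =
      negLevelSet f t ∪ posLevelSet f t := by
    rw [negLevelSet_union_posLevelSet f ht]
    simp only [Set.mem_Ioc, ht, true_and]
  calc betaOut Adj * #{x | t ∈ Set.Ioc 0 (f x ^ 2)}
      ≤ II Adj (negLevelSet f t) + II Adj (posLevelSet f t) +
          #(outBd Adj (negLevelSet f t ∪ posLevelSet f t)) := by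
        rw [hlevel]; exact betaOut_mul_card_le Adj (disjoint_negLevelSet_posLevelSet f t)
    _ ≤ _ := by
      rw [negLevelSet_union_posLevelSet f ht]
      exact_mod_cast add_le_add (II_negLevelSet_add_II_posLevelSet_le Adj f ht)
        (card_outBd_le f hsymm t)

variable {Adj} in
theorem betaOut_mul_sum_sq_le (hsymm : ∀ x y, Adj x y → Adj y x) :
    betaOut Adj * ∑ x, f x ^ 2 ≤
      2 * signlessForm Adj f + 2 * √(signlessForm Adj f * ∑ x, f x ^ 2) := by
  have hcoarea := integral_mono ((integrable_card_filter_mem_Ioc _ _).const_mul (betaOut Adj))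
    ((integrable_card_filter_mem_Ioc _ _).add (integrable_card_filter_mem_Ioc _ _))
    (betaOut_mul_card_level_le f hsymm)
  set w := signlessLocalNorm Adj f
  have hw : ∀ x, 0 ≤ w x := fun x ↦ Real.sqrt_nonneg _
  rw [integral_const_mul, integral_add' (integrable_card_filter_mem_Ioc _ _)
      (integrable_card_filter_mem_Ioc _ _),
    integral_card_filter_mem_Ioc (fun x ↦ sq_nonneg (f x)),
    integral_card_filter_mem_Ioc (fun x ↦ sq_nonneg (w x)),
    integral_card_filter_mem_Ioc fun x ↦
      sq_le_sq.2 <| (le_add_of_nonneg_left (hw x)).trans (le_abs_self _)] at hcoarea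
  have hcs : ∑ x, w x * |f x| ≤ √(signlessForm Adj f * ∑ x, f x ^ 2) := by
    rw [Real.sqrt_mul (by rw [← sum_sq_signlessLocalNorm]; positivity),
      ← sum_sq_signlessLocalNorm]
    simpa only [sq_abs] using Real.sum_mul_le_sqrt_mul_sqrt univ w (fun x ↦ |f x|)
  calc betaOut Adj * ∑ x, f x ^ 2 = betaOut Adj * ∑ x, (f x ^ 2 - 0) := by simp
    _ ≤ ∑ x, (w x ^ 2 - 0) + ∑ x, ((w x + |f x|) ^ 2 - f x ^ 2) := hcoarea
    _ = 2 * ∑ x, w x ^ 2 + 2 * ∑ x, w x * |f x| := by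
      simp only [sub_zero, mul_sum, ← sum_add_distrib]
      exact sum_congr rfl fun x _ ↦ by rw [← sq_abs (f x)]; ring
    _ ≤ _ := by rw [sum_sq_signlessLocalNorm]; linarith

end LevelSets

lemma sq_le_eight_mul_sq_of_le_two_mul_sq_add_two_mul {β s : ℝ} (hβ0 : 0 ≤ β) (hβ1 : β ≤ 1)
    (hs : 0 ≤ s) (h : β ≤ 2 * s ^ 2 + 2 * s) : β ^ 2 ≤ 8 * s ^ 2 := by
  rcases le_or_gt 1 (8 * s ^ 2) with hbig | hsmall
  · nlinarith
  · have hs38 : s < 3 / 8 := by nlinarith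
    have : β ^ 2 ≤ (2 * s ^ 2 + 2 * s) ^ 2 := pow_le_pow_left₀ hβ0 h 2
    nlinarith [mul_nonneg hs hs]

lemma Matrix.IsHermitian.exists_mulVec_eq_smul {𝕜 n : Type*} [RCLike 𝕜] [Fintype n]
    [DecidableEq n] [Nonempty n] {M : Matrix n n 𝕜} (hM : M.IsHermitian) :
    ∃ (r : ℝ) (f : n → 𝕜), f ≠ 0 ∧ M *ᵥ f = r • f := by
  obtain ⟨i⟩ := ‹Nonempty n›
  refine ⟨hM.eigenvalues i, hM.eigenvectorBasis i, fun h ↦ ?_, hM.mulVec_eigenvectorBasis i⟩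
  exact hM.eigenvectorBasis.orthonormal.ne_zero i (by ext j; exact congrFun h j)

section Regular

variable {V : Type*} [Fintype V] {Adj : V → V → Prop} {d : ℕ}

lemma sum_sum_adj_eq_mul_sum (hsymm : ∀ x y, Adj x y → Adj y x) (hreg : ∀ x, #{y | Adj x y} = d)
    (g : V → ℝ) : ∑ x, ∑ y with Adj x y, g y = d * ∑ y, g y := by
  simp_rw [sum_filter]
  rw [sum_comm, mul_sum]
  refine sum_congr rfl fun y _ ↦ ?_
  rw [← sum_filter, sum_const, nsmul_eq_mul, ← hreg y]
  congr 3
  ext x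
  simpa using ⟨hsymm x y, hsymm y x⟩

lemma signlessForm_eq_of_sum_adj_eq (hsymm : ∀ x y, Adj x y → Adj y x)
    (hreg : ∀ x, #{y | Adj x y} = d) {r : ℝ} {f : V → ℝ}
    (hf : ∀ x, ∑ y with Adj x y, f y = d * r * f x) :
    signlessForm Adj f = 2 * d * (1 + r) * ∑ x, f x ^ 2 := by
  have hexpand : ∀ x, ∑ y with Adj x y, (f x + f y) ^ 2 =
      d * f x ^ 2 + 2 * f x * (d * r * f x) + ∑ y with Adj x y, f y ^ 2 := by
    intro x
    simp only [add_sq, sum_add_distrib, sum_const, hreg x, nsmul_eq_mul, ← hf x, mul_sum]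
  rw [signlessForm, sum_congr rfl fun x _ ↦ hexpand x, sum_add_distrib,
    sum_sum_adj_eq_mul_sum hsymm hreg, mul_sum, mul_sum, ← sum_add_distrib]
  exact sum_congr rfl fun x _ ↦ by ring

lemma sum_sq_pos_of_ne_zero {f : V → ℝ} (hf : f ≠ 0) : 0 < ∑ x, f x ^ 2 := by
  obtain ⟨x, hx⟩ := Function.ne_iff.1 hf
  exact sum_pos' (fun _ _ ↦ sq_nonneg _) ⟨x, mem_univ x, sq_pos_of_ne_zero hx⟩

lemma two_mul_one_add_nonneg_of_sum_adj_eq (hsymm : ∀ x y, Adj x y → Adj y x)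
    (hreg : ∀ x, #{y | Adj x y} = d) {r : ℝ} {f : V → ℝ} (hf0 : f ≠ 0)
    (hf : ∀ x, ∑ y with Adj x y, f y = d * r * f x) :
    0 ≤ 2 * d * (1 + r) :=
  nonneg_of_mul_nonneg_left (signlessForm_eq_of_sum_adj_eq hsymm hreg hf ▸
    sum_nonneg fun _ _ ↦ sum_nonneg fun _ _ ↦ sq_nonneg _) (sum_sq_pos_of_ne_zero hf0)

theorem betaOut_sq_le_of_sum_adj_eq [Nonempty V] (hsymm : ∀ x y, Adj x y → Adj y x)
    (hreg : ∀ x, #{y | Adj x y} = d) {r : ℝ} {f : V → ℝ} (hf0 : f ≠ 0)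
    (hf : ∀ x, ∑ y with Adj x y, f y = d * r * f x) :
    betaOut Adj ^ 2 ≤ 16 * d * (1 + r) := by
  set P := ∑ x, f x ^ 2
  have hP : 0 < P := sum_sq_pos_of_ne_zero hf0
  have hs2 := two_mul_one_add_nonneg_of_sum_adj_eq hsymm hreg hf0 hf
  set s := √(2 * d * (1 + r))
  have hs : 0 ≤ s := Real.sqrt_nonneg _
  have hQ : signlessForm Adj f = s ^ 2 * P := by
    rw [Real.sq_sqrt hs2, signlessForm_eq_of_sum_adj_eq hsymm hreg hf]
  have hcoarea := betaOut_mul_sum_sq_le f hsymm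
  rw [hQ, show s ^ 2 * P * P = (s * P) ^ 2 by ring, Real.sqrt_sq (by positivity)] at hcoarea
  have hβ : betaOut Adj ≤ 2 * s ^ 2 + 2 * s :=
    le_of_mul_le_mul_right (by linarith) hP
  calc betaOut Adj ^ 2 ≤ 8 * s ^ 2 := sq_le_eight_mul_sq_of_le_two_mul_sq_add_two_mul
        (betaOut_nonneg Adj) (betaOut_le_one Adj) hs hβ
    _ = 16 * d * (1 + r) := by rw [Real.sq_sqrt hs2]; ring

lemma sum_adj_eq_of_mulVec_eq (hreg : ∀ x, #{y | Adj x y} = d) {r : ℝ} {f : V → ℝ}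
    (h : ((d : ℝ)⁻¹ • of fun x y : V ↦ if Adj x y then (1 : ℝ) else 0) *ᵥ f = r • f) (x : V) :
    ∑ y with Adj x y, f y = d * r * f x := by
  have hx := congrFun h x
  simp only [mulVec, dotProduct, Matrix.smul_apply, of_apply, smul_eq_mul, mul_ite, mul_one,
    mul_zero, ite_mul, zero_mul, ← sum_filter, ← mul_sum, Pi.smul_apply] at hx
  rcases eq_or_ne d 0 with rfl | hd
  · rw [card_eq_zero.1 (hreg x), sum_empty, Nat.cast_zero, zero_mul, zero_mul]
  · rw [mul_assoc, ← hx, mul_inv_cancel_left₀ (by exact_mod_cast hd)]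

lemma neg_one_le_of_mulVec_eq (hsymm : ∀ x y, Adj x y → Adj y x)
    (hreg : ∀ x, #{y | Adj x y} = d) {r : ℝ} {f : V → ℝ} (hf0 : f ≠ 0)
    (h : ((d : ℝ)⁻¹ • of fun x y : V ↦ if Adj x y then (1 : ℝ) else 0) *ᵥ f = r • f) :
    -1 ≤ r := by
  rcases eq_or_ne d 0 with rfl | hd
  · rw [Nat.cast_zero, _root_.inv_zero, zero_smul, zero_mulVec, eq_comm, smul_eq_zero] at h
    simp [h.resolve_right hf0]
  · have hd : (0 : ℝ) < d := by exact_mod_cast hd.bot_lt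
    have := two_mul_one_add_nonneg_of_sum_adj_eq hsymm hreg hf0 (sum_adj_eq_of_mulVec_eq hreg h)
    nlinarith

end Regular

/-- For a `d`-regular finite graph with smallest normalized adjacency eigenvalue `t₁`,
`1 + t₁ ≥ β_out²/(16d)`. -/
theorem one_add_t1_ge_betaOut_sq_bound {V : Type*} [Fintype V] [Nonempty V]
    (Adj : V → V → Prop)
    (hsymm : ∀ x y : V, Adj x y → Adj y x) (d : ℕ)
    (hreg : ∀ x : V, (Finset.univ.filter fun y => Adj x y).card = d)
    (t1 : ℝ)
    (ht1 : t1 = sInf {r : ℝ | ∃ f : V → ℝ, f ≠ 0 ∧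
      ((d : ℝ)⁻¹ • Matrix.of fun x y : V => if Adj x y then (1 : ℝ) else 0).mulVec f
        = r • f}) :
    1 + t1 ≥ betaOut Adj ^ 2 / (16 * (d : ℝ)) := by
  have hM : ((d : ℝ)⁻¹ • of fun x y : V ↦ if Adj x y then (1 : ℝ) else 0).IsHermitian := by
    refine IsHermitian.smul (IsHermitian.ext fun x y ↦ ?_) (IsSelfAdjoint.all _)
    simp only [of_apply, star_trivial]
    exact if_congr ⟨hsymm y x, hsymm x y⟩ rfl rfl
  obtain ⟨r₀, f₀, hf₀, heig₀⟩ := hM.exists_mulVec_eq_smul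
  rw [ht1, ge_iff_le, ← sub_le_iff_le_add']
  refine le_csInf ⟨r₀, f₀, hf₀, heig₀⟩ fun r ⟨f, hf0, hf⟩ ↦ sub_le_iff_le_add'.2 ?_
  -- for `d = 0` the left side is the junk value `β²/0 = 0`, hence the need for `-1 ≤ r`
  refine div_le_of_le_mul₀ (by positivity)
    (by linarith [neg_one_le_of_mulVec_eq hsymm hreg hf0 hf]) ?_
  linarith [betaOut_sq_le_of_sum_adj_eq hsymm hreg hf0 (sum_adj_eq_of_mulVec_eq hreg hf)]
end

section
/- There exists an absolute constant C > 0 such that the following holds. Let G = (V,E) be a non-bipartite finite vertex-transitive graph. Then h_out ≤ C·β_out, where h_out is the outer vertex isoperimetric constant and β_out is the outer vertex bipartiteness constant of G. -/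
attribute [local instance] Classical.propDecidable

/-- The outer vertex isoperimetric constant: the minimum of `|∂_out U|/|U|` over nonempty sets
`U` with `|U| ≤ |V|/2`. -/
noncomputable def hOut {V : Type*} [Fintype V] (Adj : V → V → Prop) : ℝ :=
  sInf {r : ℝ | ∃ U : Finset V, U.Nonempty ∧ 2 * U.card ≤ Fintype.card V ∧
    r = ((outBd Adj U).card : ℝ) / (U.card : ℝ)}

/-- A graph is bipartite if the vertex set can be partitioned into two parts such that every
edge joins the two parts. -/
def Bipartite {V : Type*} (Adj : V → V → Prop) : Prop :=
  ∃ P : V → Bool, ∀ x y, Adj x y → P x ≠ P y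

/-- A graph is vertex-transitive if its automorphism group acts transitively on vertices. -/
def IsVertexTransitive {V : Type*} (Adj : V → V → Prop) : Prop :=
  ∀ x y : V, ∃ g : Equiv.Perm V, (∀ a b : V, Adj (g a) (g b) ↔ Adj a b) ∧ g x = y

/-!
Fix disjoint `L, R`, put `S = L ∪ R` and `N = I(L) + I(R) + |∂_out S|`. If `N ≥ |S| / 1000`, the
trivial bound `h_out ≤ 2` suffices; if `|S| ≤ |V| / 2`, `S` itself is a test set. Otherwise,
dropping the vertices with a neighbour on their own side leaves independent sets `P ⊆ L`,
`Q ⊆ R` with `|P ∪ Q| ≥ |V| / 2 - N` and `|∂_out (P ∪ Q)| ≤ N`. Either the exterior of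
`P ∪ Q ∪ ∂_out (P ∪ Q)` is large, and a piece of it of size at most `|V| / 2` is a test set, or
`P ∪ Q` misses few vertices. In the latter case, since the graph is not bipartite, stability of
near-bipartitions under a transitive automorphism group yields an automorphism `g` sending a
fraction `≥ 1/100` of `P ∪ Q` to its own side and another such fraction to the opposite side; the
smaller of the two sets has outer boundary at most `2N`, inside `∂_out (P ∪ Q) ∪ g⁻¹ ∂_out (P ∪ Q)`.
-/

open Finset MulAction

section Counting

variable {G V : Type*} [Group G] [MulAction G V] [Fintype V]

lemma card_filter_smul_mem (g : G) (A : Finset V) :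
    #(univ.filter fun u => g • u ∈ A) = #A :=
  card_nbij' (g • ·) (g⁻¹ • ·) (fun u hu => by simpa using hu) (fun a ha => by simpa using ha)
    (fun u _ => by simp) (fun a _ => by simp)

variable [Fintype G] [IsPretransitive G V]

/-- Double counting of the pairs `(w, g)` with `g⁻¹ • w ∈ A`; by transitivity the number of
such `g` does not depend on `w`. -/
lemma card_filter_inv_smul_mem_mul_card (A : Finset V) (v : V) :
    #(univ.filter fun g : G => g⁻¹ • v ∈ A) * Fintype.card V = #A * Fintype.card G := by
  have hconst (w : V) : #(univ.filter fun g : G => g⁻¹ • w ∈ A) =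
      #(univ.filter fun g : G => g⁻¹ • v ∈ A) := by
    obtain ⟨k, rfl⟩ := exists_smul_eq G v w
    exact card_nbij' (k⁻¹ * ·) (k * ·) (fun g hg => by simpa [mul_smul] using hg)
      (fun g hg => by simpa [mul_smul] using hg) (fun g _ => by simp) (fun g _ => by simp)
  have hcount := sum_card_bipartiteAbove_eq_sum_card_bipartiteBelow
    (fun (w : V) (g : G) => g⁻¹ • w ∈ A) (s := univ) (t := univ)
  simp only [bipartiteAbove, bipartiteBelow, hconst, card_filter_smul_mem, sum_const, card_univ,
    smul_eq_mul] at hcount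
  linarith

end Counting

section Signs

variable {G V : Type*} [Group G] [MulAction G V] [Fintype V] (σ : V → SignType)

def signSet (g : G) (s : SignType) : Finset V :=
  univ.filter fun u => σ (g • u) = s * σ u ∧ σ u ≠ 0

def zeroSet : Finset V := univ.filter fun v => σ v = 0

/-- The sign `g` nearly multiplies `σ` by, provided it nearly preserves or nearly reverses `σ`. -/
def dominantSign (g : G) : SignType :=
  if 100 * #(signSet σ g (-1)) ≤ Fintype.card V then 1 else -1

variable {σ}

@[simp]
lemma mem_zeroSet {v : V} : v ∈ zeroSet σ ↔ σ v = 0 := by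
  simp [zeroSet]

lemma dominantSign_ne_zero (g : G) : dominantSign σ g ≠ 0 := by
  unfold dominantSign; split_ifs <;> decide

lemma card_le_card_signSet_add (g : G) :
    Fintype.card V ≤ #(signSet σ g 1) + #(signSet σ g (-1)) + 2 * #(zeroSet σ) := by
  have hcover : (univ : Finset V) ⊆ signSet σ g 1 ∪ signSet σ g (-1) ∪ zeroSet σ ∪
      univ.filter fun u => g • u ∈ zeroSet σ := by
    intro u _
    have key : ∀ a b : SignType,
        (b = 1 * a ∧ a ≠ 0) ∨ (b = -1 * a ∧ a ≠ 0) ∨ a = 0 ∨ b = 0 := by decide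
    simpa [signSet, or_assoc] using key (σ u) (σ (g • u))
  have := card_le_card hcover
  have := card_filter_smul_mem g (zeroSet σ)
  have := card_union_le (signSet σ g 1 ∪ signSet σ g (-1) ∪ zeroSet σ)
    (univ.filter fun u => g • u ∈ zeroSet σ)
  have := card_union_le (signSet σ g 1 ∪ signSet σ g (-1)) (zeroSet σ)
  have := card_union_le (signSet σ g 1) (signSet σ g (-1))
  rw [card_univ] at *
  omega

variable (hT : 1000 * #(zeroSet σ) ≤ 11 * Fintype.card V)
variable (hdich : ∀ g : G,
  100 * #(signSet σ g 1) ≤ Fintype.card V ∨ 100 * #(signSet σ g (-1)) ≤ Fintype.card V)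

include hT in
lemma card_signSet_dominantSign {g : G}
    (hg : 100 * #(signSet σ g 1) ≤ Fintype.card V ∨ 100 * #(signSet σ g (-1)) ≤ Fintype.card V) :
    968 * Fintype.card V ≤ 1000 * #(signSet σ g (dominantSign σ g)) := by
  have := card_le_card_signSet_add (σ := σ) g
  unfold dominantSign
  split_ifs <;> omega

include hT hdich in
/-- If `dominantSign` failed to be multiplicative at `(g, f)`, then the sets where `f`, `g` and
`g * f` act by their dominant signs, each of density at least `0.968`, could not meet. -/
lemma dominantSign_mul [Nonempty V] (g f : G) :
    dominantSign σ (g * f) = dominantSign σ g * dominantSign σ f := by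
  by_contra hne
  set D : G → Finset V := fun k => signSet σ k (dominantSign σ k)
  set Dg := univ.filter fun u => f • u ∈ D g
  have hdisj : Disjoint (D f ∩ Dg) (D (g * f)) := by
    refine disjoint_left.2 fun u hu hgf => hne ?_
    simp only [D, Dg, signSet, mem_inter, mem_filter, mem_univ, true_and, mul_smul] at hu hgf
    obtain ⟨⟨hf, hu0⟩, hg, -⟩ := hu
    rw [hg, hf, ← mul_assoc] at hgf
    exact mul_right_cancel₀ hu0 hgf.1.symm
  have := card_union_of_disjoint hdisj
  have := card_inter_add_card_union (D f) Dg
  have := card_le_univ (D f ∪ Dg)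
  have := card_le_univ (D f ∩ Dg ∪ D (g * f))
  have hDg : #Dg = #(D g) := card_filter_smul_mem f (D g)
  have hD (k : G) : 968 * Fintype.card V ≤ 1000 * #(D k) := card_signSet_dominantSign hT (hdich k)
  have := hD f
  have := hD g
  have := hD (g * f)
  have := Fintype.card_pos (α := V)
  omega

end Signs

lemma lt_two_mul_of_mul_le {p q z N : ℕ} (hN : 0 < N) (hcover : N ≤ p + q + z)
    (hz : 1000 * z ≤ 11 * N) (hpq : 1000 * (p * q) ≤ 32 * (N * N)) (hqp : q ≤ p) :
    N < 2 * p := by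
  by_contra! h
  nlinarith

section Majority

variable {G V : Type*} [Group G] [MulAction G V] [Fintype V] {σ : V → SignType}

variable (σ) in
def transportedSign (v : V) (g : G) : SignType := dominantSign σ g * σ (g⁻¹ • v)

lemma transportedSign_eq_of_mem
    (hmul : ∀ g f : G, dominantSign σ (g * f) = dominantSign σ g * dominantSign σ f)
    {g h : G} {v : V} (hv : g⁻¹ • v ∈ signSet σ (h⁻¹ * g) (dominantSign σ (h⁻¹ * g))) :
    transportedSign σ v g = transportedSign σ v h := by
  have hg : dominantSign σ g = dominantSign σ h * dominantSign σ (h⁻¹ * g) := by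
    rw [← hmul, mul_inv_cancel_left]
  simp only [signSet, mem_filter, mem_univ, true_and, mul_smul, smul_inv_smul] at hv
  rw [transportedSign, transportedSign, hv.1, hg, mul_assoc]

variable [Fintype G]

variable (G σ) in
def majoritySign (v : V) : SignType :=
  if #(univ.filter fun g : G => transportedSign σ v g = -1) <
      #(univ.filter fun g : G => transportedSign σ v g = 1) then 1 else -1

lemma majoritySign_ne_zero (v : V) : majoritySign G σ v ≠ 0 := by
  unfold majoritySign; split_ifs <;> decide

variable [IsPretransitive G V]

/-- Pairs `(g, h)` with opposite transported signs at `v` are pairs where `h⁻¹ * g` fails to act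
by its dominant sign at `g⁻¹ • v`; reindexing by `(g, h⁻¹ * g)`, each `f = h⁻¹ * g` accounts for a
fraction at most `0.032` of all `g`. -/
lemma card_transportedSign_one_mul_card_le
    (hmul : ∀ g f : G, dominantSign σ (g * f) = dominantSign σ g * dominantSign σ f)
    (hD : ∀ f : G, 968 * Fintype.card V ≤ 1000 * #(signSet σ f (dominantSign σ f))) (v : V) :
    1000 * (#(univ.filter fun g : G => transportedSign σ v g = 1) *
      #(univ.filter fun g : G => transportedSign σ v g = -1)) ≤
      32 * (Fintype.card G * Fintype.card G) := by
  set D : G → Finset V := fun f => signSet σ f (dominantSign σ f)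
  set B := (univ : Finset (G × G)).filter fun p => p.1⁻¹ • v ∉ D (p.2⁻¹ * p.1)
  have hsub : (univ.filter fun g : G => transportedSign σ v g = 1) ×ˢ
      (univ.filter fun g : G => transportedSign σ v g = -1) ⊆ B := by
    rintro ⟨g, h⟩ hgh
    simp only [mem_product, mem_filter, mem_univ, true_and] at hgh
    simp only [B, mem_filter, mem_univ, true_and]
    intro hmem
    have := transportedSign_eq_of_mem hmul hmem
    rw [hgh.1, hgh.2] at this
    exact absurd this (by decide)
  have hB : #B = ∑ f : G, #(univ.filter fun g : G => g⁻¹ • v ∈ (D f)ᶜ) := by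
    have hpair : #B = #((univ : Finset (G × G)).filter fun p => p.1⁻¹ • v ∉ D p.2) :=
      card_nbij' (fun p => (p.1, p.2⁻¹ * p.1)) (fun p => (p.1, p.1 * p.2⁻¹))
        (fun p hp => by simpa [B] using hp) (fun p hp => by simpa [B] using hp)
        (fun p _ => by simp) (fun p _ => by simp)
    rw [hpair, card_filter, ← univ_product_univ, sum_product_right]
    simp only [mem_compl, ← card_filter]
  have hfiber (f : G) :
      1000 * #(univ.filter fun g : G => g⁻¹ • v ∈ (D f)ᶜ) ≤ 32 * Fintype.card G := by
    have hcount := card_filter_inv_smul_mem_mul_card (G := G) (D f)ᶜ v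
    have hDf := hD f
    have hcompl : #(D f)ᶜ + #(D f) = Fintype.card V := card_compl_add_card _
    have hn : 0 < Fintype.card V := Fintype.card_pos_iff.2 ⟨v⟩
    nlinarith
  have := card_le_card hsub
  rw [card_product] at this
  calc 1000 * _ ≤ 1000 * #B := by omega
    _ = ∑ f : G, 1000 * #(univ.filter fun g : G => g⁻¹ • v ∈ (D f)ᶜ) := by rw [hB, mul_sum]
    _ ≤ ∑ _f : G, 32 * Fintype.card G := sum_le_sum fun f _ => hfiber f
    _ = 32 * (Fintype.card G * Fintype.card G) := by rw [sum_const, card_univ, smul_eq_mul]; ring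

lemma card_majoritySign (hT : 1000 * #(zeroSet σ) ≤ 11 * Fintype.card V)
    (hmul : ∀ g f : G, dominantSign σ (g * f) = dominantSign σ g * dominantSign σ f)
    (hD : ∀ f : G, 968 * Fintype.card V ≤ 1000 * #(signSet σ f (dominantSign σ f))) (v : V) :
    Fintype.card G <
      2 * #(univ.filter fun g : G => transportedSign σ v g = majoritySign G σ v) := by
  set F : SignType → Finset G := fun s => univ.filter fun g => transportedSign σ v g = s
  have hcover : Fintype.card G ≤ #(F 1) + #(F (-1)) + #(F 0) := by
    have hsub : (univ : Finset G) ⊆ F 1 ∪ F (-1) ∪ F 0 := by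
      intro g _
      have key : ∀ s : SignType, s = 1 ∨ s = -1 ∨ s = 0 := by decide
      simpa [F, or_assoc] using key (transportedSign σ v g)
    have h := card_le_card hsub
    rw [card_univ] at h
    have := card_union_le (F 1 ∪ F (-1)) (F 0)
    have := card_union_le (F 1) (F (-1))
    omega
  have hzero : 1000 * #(F 0) ≤ 11 * Fintype.card G := by
    have hF0 : F 0 = univ.filter fun g : G => g⁻¹ • v ∈ zeroSet σ := by
      ext g
      simp [F, transportedSign, dominantSign_ne_zero]
    have hcount := card_filter_inv_smul_mem_mul_card (G := G) (zeroSet σ) v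
    have hn : 0 < Fintype.card V := Fintype.card_pos_iff.2 ⟨v⟩
    rw [← hF0] at hcount
    nlinarith
  have hpq : 1000 * (#(F 1) * #(F (-1))) ≤ 32 * (Fintype.card G * Fintype.card G) :=
    card_transportedSign_one_mul_card_le hmul hD v
  have hG : 0 < Fintype.card G := Fintype.card_pos
  change Fintype.card G < 2 * #(F (majoritySign G σ v))
  unfold majoritySign
  split_ifs with h
  · exact lt_two_mul_of_mul_le hG hcover hzero hpq h.le
  · rw [mul_comm (#(F 1))] at hpq
    exact lt_two_mul_of_mul_le hG (by omega) hzero hpq (not_lt.1 h)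

/-- Since `g ↦ dominantSign σ g` is a homomorphism to `{±1}`, the transported signs at each
vertex mostly agree, and their majority is a proper 2-colouring. -/
theorem bipartite_of_forall_signSet_small {Adj : V → V → Prop}
    (hadj : ∀ (g : G) {a b : V}, Adj a b → Adj (g • a) (g • b))
    (hσ : ∀ v w, Adj v w → σ v ≠ 0 → σ w ≠ 0 → σ w = -σ v)
    (hT : 1000 * #(zeroSet σ) ≤ 11 * Fintype.card V)
    (hdich : ∀ g : G,
      100 * #(signSet σ g 1) ≤ Fintype.card V ∨ 100 * #(signSet σ g (-1)) ≤ Fintype.card V) :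
    Bipartite Adj := by
  refine ⟨fun v => decide (majoritySign G σ v = 1), fun x y hxy hxy' => ?_⟩
  have : Nonempty V := ⟨x⟩
  have hD (f : G) := card_signSet_dominantSign hT (hdich f)
  have hmul := dominantSign_mul hT hdich (G := G)
  set M : V → Finset G := fun v => univ.filter fun g => transportedSign σ v g = majoritySign G σ v
  have hMx : Fintype.card G < 2 * #(M x) := card_majoritySign hT hmul hD x
  have hMy : Fintype.card G < 2 * #(M y) := card_majoritySign hT hmul hD y
  obtain ⟨g, hg⟩ := inter_nonempty_of_card_lt_card_add_card (subset_univ (M x))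
    (subset_univ (M y)) (by rw [card_univ]; omega)
  obtain ⟨hgx, hgy⟩ := mem_inter.1 hg
  replace hgx : dominantSign σ g * σ (g⁻¹ • x) = majoritySign G σ x := (mem_filter.1 hgx).2
  replace hgy : dominantSign σ g * σ (g⁻¹ • y) = majoritySign G σ y := (mem_filter.1 hgy).2
  have hx0 : σ (g⁻¹ • x) ≠ 0 := fun h => majoritySign_ne_zero x (by rw [← hgx, h, mul_zero])
  have hy0 : σ (g⁻¹ • y) ≠ 0 := fun h => majoritySign_ne_zero y (by rw [← hgy, h, mul_zero])
  have hflip := hσ _ _ (hadj g⁻¹ hxy) hx0 hy0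
  rw [hflip, mul_neg, hgx] at hgy
  have key : ∀ s : SignType, s ≠ 0 → decide (s = 1) ≠ decide (-s = 1) := by decide
  exact key (majoritySign G σ x) (majoritySign_ne_zero x) (by rw [hgy]; exact hxy')

end Majority

section Boundary

variable {V : Type*} [Fintype V] {Adj : V → V → Prop}

lemma card_outBd_add_card_le_of_subset {U W : Finset V} (h : U ⊆ W) :
    #(outBd Adj U) + #U ≤ #(outBd Adj W) + #W := by
  have hsub : outBd Adj U ⊆ outBd Adj W ∪ (W \ U) := by
    intro y hy
    simp only [outBd, mem_filter, mem_univ, true_and] at hy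
    obtain ⟨hyU, x, hx, hxy⟩ := hy
    by_cases hyW : y ∈ W
    · exact mem_union_right _ (mem_sdiff.2 ⟨hyW, hyU⟩)
    · exact mem_union_left _ (by simpa [outBd] using ⟨hyW, x, h hx, hxy⟩)
  have := card_le_card hsub
  have := card_union_le (outBd Adj W) (W \ U)
  have := card_sdiff_add_card_eq_card h
  omega

lemma outBd_compl_subset (hsymm : ∀ x y : V, Adj x y → Adj y x) (S : Finset V) :
    outBd Adj (S ∪ outBd Adj S)ᶜ ⊆ outBd Adj S := by
  intro y hy
  obtain ⟨hyW, x, hxW, hxy⟩ := (mem_filter.1 hy).2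
  rw [mem_compl, not_not, mem_union] at hyW
  rw [mem_compl, mem_union, not_or] at hxW
  refine hyW.resolve_left fun hyS => hxW.2 ?_
  exact mem_filter.2 ⟨mem_univ _, hxW.1, y, hyS, hsymm x y hxy⟩

end Boundary

section Isolated

variable {V : Type*} {Adj : V → V → Prop}

variable (Adj) in
noncomputable def isolatedPart (L : Finset V) : Finset V := L.filter fun x => ¬ ∃ y ∈ L, Adj x y

lemma card_isolatedPart_add_II (L : Finset V) : #(isolatedPart Adj L) + II Adj L = #L := by
  rw [add_comm]; exact card_filter_add_card_filter_not _

lemma not_adj_of_mem_isolatedPart {L : Finset V} {x y : V} (hx : x ∈ isolatedPart Adj L)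
    (hy : y ∈ isolatedPart Adj L) : ¬ Adj x y :=
  fun hxy => (mem_filter.1 hx).2 ⟨y, (mem_filter.1 hy).1, hxy⟩

end Isolated

section SideSign

variable {V : Type*} {Adj : V → V → Prop}

noncomputable def sideSign (P Q : Finset V) (v : V) : SignType :=
  if v ∈ P then 1 else if v ∈ Q then -1 else 0

lemma zeroSet_sideSign [Fintype V] (P Q : Finset V) : zeroSet (sideSign P Q) = (P ∪ Q)ᶜ := by
  ext v
  rw [mem_zeroSet, mem_compl, mem_union, not_or, sideSign]
  split_ifs <;> simp_all

lemma sideSign_neg_of_adj {P Q : Finset V} (hP : ∀ x ∈ P, ∀ y ∈ P, ¬ Adj x y)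
    (hQ : ∀ x ∈ Q, ∀ y ∈ Q, ¬ Adj x y) (v w : V) (hvw : Adj v w) (hv : sideSign P Q v ≠ 0)
    (hw : sideSign P Q w ≠ 0) : sideSign P Q w = -sideSign P Q v := by
  unfold sideSign at *
  split_ifs at * <;> first | rfl | simp_all

end SideSign

section TestSets

variable {G V : Type*} [Group G] [MulAction G V] [Fintype V] {Adj : V → V → Prop}

lemma card_outBd_signSet_le {σ : V → SignType}
    (hadj : ∀ (g : G) {a b : V}, Adj a b → Adj (g • a) (g • b))
    (hσ : ∀ v w, Adj v w → σ v ≠ 0 → σ w ≠ 0 → σ w = -σ v) (g : G) {s : SignType} (hs : s ≠ 0) :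
    #(outBd Adj (signSet σ g s)) ≤ 2 * #(outBd Adj (zeroSet σ)ᶜ) := by
  set S := (zeroSet σ)ᶜ
  have hsub : outBd Adj (signSet σ g s) ⊆
      outBd Adj S ∪ univ.filter fun y => g • y ∈ outBd Adj S := by
    intro y hy
    obtain ⟨hyA, x, hxA, hxy⟩ := (mem_filter.1 hy).2
    obtain ⟨hgx, hx0⟩ := (mem_filter.1 hxA).2
    have hgx0 : σ (g • x) ≠ 0 := by rw [hgx]; exact mul_ne_zero hs hx0
    by_cases hy0 : σ y = 0
    · exact mem_union_left _ (mem_filter.2 ⟨mem_univ _, by simpa [S] using hy0, x,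
        by simpa [S] using hx0, hxy⟩)
    by_cases hgy0 : σ (g • y) = 0
    · exact mem_union_right _ (mem_filter.2 ⟨mem_univ _, mem_filter.2 ⟨mem_univ _,
        by simpa [S] using hgy0, g • x, by simpa [S] using hgx0, hadj g hxy⟩⟩)
    refine absurd (mem_filter.2 ⟨mem_univ _, ?_, hy0⟩) hyA
    rw [hσ _ _ (hadj g hxy) hgx0 hgy0, hσ _ _ hxy hx0 hy0, hgx, mul_neg]
  have := card_le_card hsub
  have := card_union_le (outBd Adj S) (univ.filter fun y => g • y ∈ outBd Adj S)
  have := card_filter_smul_mem g (outBd Adj S)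
  omega

lemma exists_testSet_of_not_bipartite [Fintype G] [IsPretransitive G V] {σ : V → SignType}
    (hadj : ∀ (g : G) {a b : V}, Adj a b → Adj (g • a) (g • b)) (hnb : ¬ Bipartite Adj)
    (hσ : ∀ v w, Adj v w → σ v ≠ 0 → σ w ≠ 0 → σ w = -σ v)
    (hT : 1000 * #(zeroSet σ) ≤ 11 * Fintype.card V) :
    ∃ U : Finset V, U.Nonempty ∧ 2 * #U ≤ Fintype.card V ∧ Fintype.card V ≤ 100 * #U ∧
      #(outBd Adj U) ≤ 2 * #(outBd Adj (zeroSet σ)ᶜ) := by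
  obtain ⟨g, hg⟩ := not_forall.1 (mt (bipartite_of_forall_signSet_small hadj hσ hT) hnb)
  push Not at hg
  have hdisj : Disjoint (signSet σ g 1) (signSet σ g (-1)) := by
    refine disjoint_left.2 fun u h1 h2 => ?_
    obtain ⟨e1, h0⟩ := (mem_filter.1 h1).2
    have e2 := (mem_filter.1 h2).2.1
    rw [e1] at e2
    generalize σ u = a at h0 e2
    revert a
    decide
  have := card_union_of_disjoint hdisj
  have := card_le_univ (signSet σ g 1 ∪ signSet σ g (-1))
  rcases le_total #(signSet σ g 1) #(signSet σ g (-1)) with h | h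
  · exact ⟨signSet σ g 1, card_pos.1 (by omega), by omega, by omega,
      card_outBd_signSet_le hadj hσ g one_ne_zero⟩
  · exact ⟨signSet σ g (-1), card_pos.1 (by omega), by omega, by omega,
      card_outBd_signSet_le hadj hσ g (by decide)⟩

lemma exists_testSet_of_large_exterior [Nonempty V] (hsymm : ∀ x y : V, Adj x y → Adj y x)
    (S : Finset V) {N : ℕ} (hS : #(outBd Adj S) ≤ N) (hN : 1000 * N ≤ Fintype.card V)
    (hSn : Fintype.card V ≤ 2 * (#S + N))
    (hW : Fintype.card V ≤ 100 * #(S ∪ outBd Adj S)ᶜ) :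
    ∃ U : Finset V, U.Nonempty ∧ 2 * #U ≤ Fintype.card V ∧ Fintype.card V ≤ 100 * #U ∧
      #(outBd Adj U) ≤ 2 * N := by
  set W := (S ∪ outBd Adj S)ᶜ
  obtain ⟨U, hUW, hU⟩ := exists_subset_card_eq (min_le_left #W (Fintype.card V / 2))
  have hWS : #W + #S ≤ Fintype.card V := by
    have : #W + #(S ∪ outBd Adj S) = Fintype.card V := card_compl_add_card _
    have := card_le_card (subset_union_left (s₁ := S) (s₂ := outBd Adj S))
    omega
  have := card_outBd_add_card_le_of_subset (Adj := Adj) hUW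
  have hWbd : #(outBd Adj W) ≤ #(outBd Adj S) := card_le_card (outBd_compl_subset hsymm S)
  have := Fintype.card_pos (α := V)
  exact ⟨U, card_pos.1 (by omega), by omega, by omega, by omega⟩

lemma exists_testSet [Nonempty V] [Fintype G] [IsPretransitive G V]
    (hsymm : ∀ x y : V, Adj x y → Adj y x)
    (hadj : ∀ (g : G) {a b : V}, Adj a b → Adj (g • a) (g • b)) (hnb : ¬ Bipartite Adj)
    {P Q : Finset V} (hP : ∀ x ∈ P, ∀ y ∈ P, ¬ Adj x y) (hQ : ∀ x ∈ Q, ∀ y ∈ Q, ¬ Adj x y)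
    {N : ℕ} (hPQ : #(outBd Adj (P ∪ Q)) ≤ N) (hN : 1000 * N ≤ Fintype.card V)
    (hPQn : Fintype.card V ≤ 2 * (#(P ∪ Q) + N)) :
    ∃ U : Finset V, U.Nonempty ∧ 2 * #U ≤ Fintype.card V ∧ Fintype.card V ≤ 100 * #U ∧
      #(outBd Adj U) ≤ 2 * N := by
  by_cases hW : Fintype.card V ≤ 100 * #(P ∪ Q ∪ outBd Adj (P ∪ Q))ᶜ
  · exact exists_testSet_of_large_exterior hsymm _ hPQ hN hPQn hW
  have hT : 1000 * #(zeroSet (sideSign P Q)) ≤ 11 * Fintype.card V := by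
    have hsub : (P ∪ Q)ᶜ ⊆ (P ∪ Q ∪ outBd Adj (P ∪ Q))ᶜ ∪ outBd Adj (P ∪ Q) := by
      intro v hv
      by_cases hbd : v ∈ outBd Adj (P ∪ Q)
      · exact mem_union_right _ hbd
      · exact mem_union_left _ (by simp_all)
    have := card_le_card hsub
    have := card_union_le (P ∪ Q ∪ outBd Adj (P ∪ Q))ᶜ (outBd Adj (P ∪ Q))
    rw [zeroSet_sideSign]
    omega
  obtain ⟨U, hU, h2U, hUn, hUbd⟩ :=
    exists_testSet_of_not_bipartite hadj hnb (sideSign_neg_of_adj hP hQ) hT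
  rw [zeroSet_sideSign, compl_compl] at hUbd
  exact ⟨U, hU, h2U, hUn, by omega⟩

end TestSets

section IsoperimetricConstants

variable {V : Type*} [Fintype V] {Adj : V → V → Prop}

lemma hOut_le_div_card {U : Finset V} (hU : U.Nonempty) (h2U : 2 * #U ≤ Fintype.card V) :
    hOut Adj ≤ #(outBd Adj U) / #U :=
  csInf_le ⟨0, by rintro _ ⟨U', -, -, rfl⟩; positivity⟩ ⟨U, hU, h2U, rfl⟩

lemma hOut_le_two : hOut Adj ≤ 2 := by
  rcases le_or_gt (Fintype.card V) 1 with h | h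
  · have hempty : {r : ℝ | ∃ U : Finset V, U.Nonempty ∧ 2 * #U ≤ Fintype.card V ∧
        r = #(outBd Adj U) / #U} = ∅ :=
      Set.eq_empty_of_forall_notMem fun r ⟨U, hU, h2U, _⟩ => by have := hU.card_pos; omega
    rw [hOut, hempty, Real.sInf_empty]
    norm_num
  obtain ⟨U, -, hU⟩ := exists_subset_card_eq (s := univ) (Nat.div_le_self (Fintype.card V) 2)
  have hUpos : 0 < #U := by omega
  have hbd := card_outBd_add_card_le_of_subset (Adj := Adj) (subset_univ U)
  rw [show outBd Adj univ = ∅ by simp [outBd], card_empty, card_univ] at hbd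
  calc hOut Adj ≤ #(outBd Adj U) / #U := hOut_le_div_card (card_pos.1 hUpos) (by omega)
    _ ≤ 2 := by
      rw [div_le_iff₀ (by exact_mod_cast hUpos)]
      exact_mod_cast (by omega : #(outBd Adj U) ≤ 2 * #U)

lemma hOut_le_of_testSet {U : Finset V} {N s : ℕ} (hU : U.Nonempty)
    (h2U : 2 * #U ≤ Fintype.card V) (hUn : Fintype.card V ≤ 100 * #U)
    (hUbd : #(outBd Adj U) ≤ 2 * N) (hs : 0 < s) (hsn : s ≤ Fintype.card V) :
    hOut Adj ≤ 2000 * N / s := by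
  calc hOut Adj ≤ #(outBd Adj U) / #U := hOut_le_div_card hU h2U
    _ ≤ 2000 * N / s := by
      rw [div_le_div_iff₀ (by exact_mod_cast hU.card_pos) (by exact_mod_cast hs)]
      have : #(outBd Adj U) * s ≤ 2000 * N * #U := by
        calc #(outBd Adj U) * s ≤ 2 * N * (100 * #U) := Nat.mul_le_mul hUbd (hsn.trans hUn)
          _ ≤ 2000 * N * #U := by nlinarith
      exact_mod_cast this

lemma le_betaOut [Nonempty V] {c : ℝ} (h : ∀ L R : Finset V, Disjoint L R → (L ∪ R).Nonempty →
    c ≤ ((II Adj L : ℝ) + (II Adj R : ℝ) + (#(outBd Adj (L ∪ R)) : ℝ)) / (#(L ∪ R) : ℝ)) :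
    c ≤ betaOut Adj :=
  le_csInf (let ⟨v⟩ := ‹Nonempty V›; ⟨_, {v}, ∅, disjoint_empty_right _, by simp, rfl⟩)
    (by rintro _ ⟨L, R, hLR, hne, rfl⟩; exact h L R hLR hne)

lemma hOut_le_of_disjoint {G : Type*} [Group G] [MulAction G V] [Fintype G]
    [IsPretransitive G V] (hsymm : ∀ x y : V, Adj x y → Adj y x)
    (hadj : ∀ (g : G) {a b : V}, Adj a b → Adj (g • a) (g • b)) (hnb : ¬ Bipartite Adj)
    {L R : Finset V} (hLR : Disjoint L R) (hne : (L ∪ R).Nonempty) :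
    hOut Adj ≤ 2000 * (((II Adj L : ℝ) + (II Adj R : ℝ) + (#(outBd Adj (L ∪ R)) : ℝ)) /
      (#(L ∪ R) : ℝ)) := by
  set S := L ∪ R
  set N := II Adj L + II Adj R + #(outBd Adj S)
  rw [show (II Adj L : ℝ) + II Adj R + #(outBd Adj S) = N by push_cast [N]; rfl, mul_div_assoc']
  have hS : (0 : ℝ) < #S := by exact_mod_cast hne.card_pos
  have hSn : #S ≤ Fintype.card V := card_le_univ S
  rcases le_or_gt #S (1000 * N) with hbig | hsmall
  · calc hOut Adj ≤ 2 := hOut_le_two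
      _ ≤ 2000 * N / #S := by
        rw [le_div_iff₀ hS]
        exact_mod_cast (by omega : 2 * #S ≤ 2000 * N)
  rcases le_or_gt (2 * #S) (Fintype.card V) with hhalf | hhalf
  · calc hOut Adj ≤ #(outBd Adj S) / #S := hOut_le_div_card hne hhalf
      _ ≤ 2000 * N / #S := by
        gcongr
        exact_mod_cast (by omega : #(outBd Adj S) ≤ 2000 * N)
  have : Nonempty V := ⟨hne.choose⟩
  have hPQ : isolatedPart Adj L ∪ isolatedPart Adj R ⊆ S :=
    union_subset_union (filter_subset _ _) (filter_subset _ _)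
  have hcard : #(isolatedPart Adj L ∪ isolatedPart Adj R) + II Adj L + II Adj R = #S := by
    have hdisj : Disjoint (isolatedPart Adj L) (isolatedPart Adj R) :=
      hLR.mono (filter_subset _ _) (filter_subset _ _)
    rw [card_union_of_disjoint hdisj, card_union_of_disjoint hLR, ← card_isolatedPart_add_II L,
      ← card_isolatedPart_add_II R]
    ring
  have hbd := card_outBd_add_card_le_of_subset (Adj := Adj) hPQ
  obtain ⟨U, hU, h2U, hUn, hUbd⟩ := exists_testSet (G := G) (P := isolatedPart Adj L)
    (Q := isolatedPart Adj R) hsymm hadj hnb (fun _ hx _ hy => not_adj_of_mem_isolatedPart hx hy)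
    (fun _ hx _ hy => not_adj_of_mem_isolatedPart hx hy) (N := N) (by omega) (by omega) (by omega)
  exact hOut_le_of_testSet hU h2U hUn hUbd hne.card_pos hSn

end IsoperimetricConstants

section Automorphisms

variable {V : Type*} (Adj : V → V → Prop)

def autGroup : Subgroup (Equiv.Perm V) where
  carrier := {g | ∀ a b, Adj (g a) (g b) ↔ Adj a b}
  mul_mem' hg hh a b := (hg _ _).trans (hh a b)
  one_mem' _ _ := Iff.rfl
  inv_mem' {g} hg a b := by simpa using (hg (g⁻¹ a) (g⁻¹ b)).symm

variable {Adj}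

lemma autGroup_adj_smul (g : autGroup Adj) {a b : V} (h : Adj a b) : Adj (g • a) (g • b) :=
  (g.2 a b).2 h

lemma IsVertexTransitive.isPretransitive_autGroup (h : IsVertexTransitive Adj) :
    IsPretransitive (autGroup Adj) V :=
  ⟨fun x y => let ⟨g, hg, hxy⟩ := h x y; ⟨⟨g, hg⟩, hxy⟩⟩

lemma nonempty_of_not_bipartite (h : ¬ Bipartite Adj) : Nonempty V :=
  not_isEmpty_iff.1 fun _ => h ⟨fun _ => true, fun x => isEmptyElim x⟩

end Automorphisms

/-- There is an absolute constant `C > 0` such that every non-bipartite finite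
vertex-transitive graph satisfies `h_out ≤ C β_out`. -/
theorem vertexTransitive_hOut_le_betaOut :
    ∃ C > (0 : ℝ),
      ∀ (V : Type) [Fintype V] (Adj : V → V → Prop),
        (∀ x y : V, Adj x y → Adj y x) →
        IsVertexTransitive Adj →
        ¬ Bipartite Adj →
        hOut Adj ≤ C * betaOut Adj := by
  refine ⟨2000, by norm_num, fun V _ Adj hsymm htrans hnb => ?_⟩
  have := htrans.isPretransitive_autGroup
  have := nonempty_of_not_bipartite hnb
  rw [← div_le_iff₀' (by norm_num)]
  refine le_betaOut fun L R hLR hne => ?_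
  rw [div_le_iff₀' (by norm_num)]
  exact hOut_le_of_disjoint hsymm autGroup_adj_smul hnb hLR hne
end
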